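/- Assume Assumption (†). Let V be a subvariety of ℙ^m over F with V(F) infinite. Then there exist finitely many weakly saturated locally closed subvarieties W₁, …, W_k ⊆ V such that lim_{B→∞} N(W₁ ∪ ⋯ ∪ W_k, B)/N(V,B) = 1. -/

import Mathlib

open Filter Topology

namespace ProjSat

/-- The set of `F`-rational points of projective `m`-space, modelled as the
projectivization of `F^(m+1)`. -/
abbrev Pt (F : Type) [Field F] (m : ℕ) := Projectivization F (Fin (m + 1) → F)

variable (F : Type) [Field F] (m : ℕ)

/-- A polynomial `p` vanishes at a point `x ∈ ℙ^m(F)` if it vanishes on every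
vector representing `x`. -/
def Vanishes (p : MvPolynomial (Fin (m + 1)) F) (x : Pt F m) : Prop :=
  ∀ (v : Fin (m + 1) → F) (hv : v ≠ 0),
    Projectivization.mk F v hv = x → MvPolynomial.eval v p = 0

/-- The Zariski topology on `ℙ^m(F)`: it is generated by the complements of the
zero loci of homogeneous polynomials. -/
instance zariskiTopology : TopologicalSpace (Pt F m) :=
  TopologicalSpace.generateFrom
    { U | ∃ (p : MvPolynomial (Fin (m + 1)) F) (d : ℕ),
        p.IsHomogeneous d ∧ U = { x | ¬ Vanishes F m p x } }

variable {F m}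

/-- The dimension of a subvariety: the topological Krull dimension of the subspace. -/
noncomputable def dimv (V : Set (Pt F m)) : WithBot ℕ∞ :=
  topologicalKrullDim V

variable (H : Pt F m → ℝ)

/-- The height counting function `N(V, B) = #{x ∈ V(F) : H(x) ≤ B}`. -/
noncomputable def Ncount (V : Set (Pt F m)) (B : ℝ) : ℕ :=
  {x ∈ V | H x ≤ B}.ncard

/-- The counting ratio `B ↦ N(V', B) / N(V, B)`. -/
noncomputable def ratio (V' V : Set (Pt F m)) : ℝ → ℝ :=
  fun B => (Ncount H V' B : ℝ) / (Ncount H V B : ℝ)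

/-- Assumption (†): for all locally closed subvarieties `V' ⊆ V` of `ℙ^m` over `F`
with `V(F)` infinite, the limit `lim_{B→∞} N(V',B)/N(V,B)` exists. -/
def Dagger : Prop :=
  ∀ V' V : Set (Pt F m), IsLocallyClosed V' → IsLocallyClosed V → V' ⊆ V →
    V.Infinite → ∃ L : ℝ, Tendsto (ratio H V' V) atTop (𝓝 L)

/-- `U` is a dense Zariski open subset of `V`. -/
def IsDenseOpenIn (U V : Set (Pt F m)) : Prop :=
  (∃ O : Set (Pt F m), IsOpen O ∧ U = V ∩ O) ∧ V ⊆ closure U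

/-- `V` is weakly saturated: `V` is irreducible, `V(F)` is infinite, and for every
locally closed subvariety `W ⊆ V` with `dim W < dim V` one has
`lim_{B→∞} N(W,B)/N(V,B) < 1`. -/
def WeaklySaturated (V : Set (Pt F m)) : Prop :=
  IsIrreducible V ∧ V.Infinite ∧
    ∀ W : Set (Pt F m), IsLocallyClosed W → W ⊆ V → dimv W < dimv V →
      ∃ L : ℝ, Tendsto (ratio H W V) atTop (𝓝 L) ∧ L < 1

/-- `V` is strongly saturated: `V` is irreducible, `V(F)` is infinite, and for every
dense Zariski open subset `U ⊆ V` one has `lim_{B→∞} N(U,B)/N(V,B) = 1`. -/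
def StronglySaturated (V : Set (Pt F m)) : Prop :=
  IsIrreducible V ∧ V.Infinite ∧
    ∀ U : Set (Pt F m), IsDenseOpenIn U V →
      Tendsto (ratio H U V) atTop (𝓝 1)

end ProjSat

/-!
Induct on the pair (dimension of `V`, Zariski closure of `V`), ordered lexicographically; this
is well founded because `ℙ^m(F)` is a Noetherian space. If `V` is reducible, an open set `u`
cuts it into the disjoint locally closed pieces `V ∩ u` and `V ∩ uᶜ`, both with strictly smaller
closure, and by (†) their proportions `δ₁, δ₂` of the points of `V` satisfy `δ₁ + δ₂ = 1`.
If `V` is irreducible but not weakly saturated, some `W ⊆ V` of smaller dimension has limit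
proportion `≥ 1`, hence `= 1`, and one recurses into `W`. Finite pieces have proportion `0`
and are discarded.
-/

open TopologicalSpace

theorem MvPolynomial.IsHomogeneous.eval_smul {σ R : Type*} [CommSemiring R]
    {p : MvPolynomial σ R} {n : ℕ} (hp : p.IsHomogeneous n) (a : R) (v : σ → R) :
    MvPolynomial.eval (a • v) p = a ^ n * MvPolynomial.eval v p := by
  simp only [MvPolynomial.eval_eq, Finset.mul_sum, Pi.smul_apply, smul_eq_mul, mul_pow,
    Finset.prod_mul_distrib, Finset.prod_pow_eq_pow_sum]
  refine Finset.sum_congr rfl fun d hd => ?_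
  rw [← hp (MvPolynomial.mem_support_iff.mp hd), Finsupp.weight_apply, Finsupp.sum]
  simp only [Pi.one_apply, smul_eq_mul, mul_one]
  ring

theorem exists_closure_ssubset_of_not_isPreirreducible {X : Type*} [TopologicalSpace X]
    {s : Set X} (hs : ¬ IsPreirreducible s) :
    ∃ u, IsOpen u ∧ closure (s ∩ u) ⊂ closure s ∧ closure (s ∩ uᶜ) ⊂ closure s := by
  simp only [IsPreirreducible, not_forall, Set.not_nonempty_iff_eq_empty] at hs
  obtain ⟨u, v, hu, hv, ⟨x, hxs, hxu⟩, ⟨y, hys, hyv⟩, huv⟩ := hs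
  refine ⟨u, hu, (Set.ssubset_iff_of_subset (closure_mono Set.inter_subset_left)).mpr
    ⟨y, subset_closure hys, fun hy => ?_⟩,
    (Set.ssubset_iff_of_subset (closure_mono Set.inter_subset_left)).mpr
    ⟨x, subset_closure hxs, fun hx => ?_⟩⟩
  · obtain ⟨z, hzv, hzs, hzu⟩ := mem_closure_iff.mp hy v hv hyv
    exact (Set.eq_empty_iff_forall_notMem.mp huv) z ⟨hzs, hzu, hzv⟩
  · exact closure_minimal Set.inter_subset_right hu.isClosed_compl hx hxu

namespace ProjSat

variable {F : Type} [Field F] {m : ℕ} {H : Pt F m → ℝ}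

theorem vanishes_mk_iff {p : MvPolynomial (Fin (m + 1)) F} {n : ℕ} (hp : p.IsHomogeneous n)
    {v : Fin (m + 1) → F} (hv : v ≠ 0) :
    Vanishes F m p (Projectivization.mk F v hv) ↔ MvPolynomial.eval v p = 0 := by
  refine ⟨fun h => h v hv rfl, fun h w hw hwv => ?_⟩
  obtain ⟨a, rfl⟩ := (Projectivization.mk_eq_mk_iff F w v hw hv).mp hwv
  rw [Units.smul_def, hp.eval_smul, h, mul_zero]

/-- `ℙ^m(F)` is the image of the nonzero vectors of `F^(m+1)`, whose topology pulled back from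
`Spec F[X₀, …, Xₘ]` is Noetherian by Hilbert's basis theorem. -/
instance : NoetherianSpace (Pt F m) := by
  let toSpec : {v : Fin (m + 1) → F // v ≠ 0} → PrimeSpectrum (MvPolynomial (Fin (m + 1)) F) :=
    fun v => ⟨RingHom.ker (MvPolynomial.eval v.1), RingHom.ker_isPrime _⟩
  let : TopologicalSpace {v : Fin (m + 1) → F // v ≠ 0} := .induced toSpec inferInstance
  have : NoetherianSpace {v : Fin (m + 1) → F // v ≠ 0} :=
    Topology.IsInducing.noetherianSpace (i := toSpec) ⟨rfl⟩
  refine noetherianSpace_of_surjective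
    (fun v : {v : Fin (m + 1) → F // v ≠ 0} => Projectivization.mk F v.1 v.2) ?_
    fun x => ⟨⟨x.rep, x.rep_nonzero⟩, x.mk_rep⟩
  refine continuous_generateFrom_iff.mpr ?_
  rintro _ ⟨p, n, hp, rfl⟩
  have hpre : (fun v : {v // v ≠ 0} => Projectivization.mk F v.1 v.2) ⁻¹'
      {x | ¬ Vanishes F m p x} = toSpec ⁻¹' PrimeSpectrum.basicOpen p := by
    ext v
    simp [vanishes_mk_iff hp, toSpec]
  rw [hpre]
  exact isOpen_induced (PrimeSpectrum.basicOpen p).isOpen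

theorem dimv_mono {V' V : Set (Pt F m)} (h : V' ⊆ V) : dimv V' ≤ dimv V :=
  (Topology.IsEmbedding.inclusion h).isInducing.topologicalKrullDim_le

noncomputable def complexity (V : Set (Pt F m)) : WithBot ℕ∞ ×ₗ Closeds (Pt F m) :=
  toLex (dimv V, Closeds.closure V)

theorem wellFounded_complexity :
    WellFounded fun V W : Set (Pt F m) => complexity V < complexity W :=
  InvImage.wf complexity wellFounded_lt

theorem complexity_lt_of_dimv_lt {W V : Set (Pt F m)} (h : dimv W < dimv V) :
    complexity W < complexity V :=
  Prod.Lex.toLex_lt_toLex.mpr (Or.inl h)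

theorem complexity_lt_of_closure_ssubset {W V : Set (Pt F m)} (hWV : W ⊆ V)
    (h : closure W ⊂ closure V) : complexity W < complexity V :=
  Prod.Lex.toLex_lt_toLex'.mpr ⟨dimv_mono hWV, fun _ => h⟩

theorem finite_sep_height_le (hN : ∀ B : ℝ, {x | H x ≤ B}.Finite) (V : Set (Pt F m)) (B : ℝ) :
    {x ∈ V | H x ≤ B}.Finite :=
  (hN B).subset (Set.sep_subset_ofPred V _)

theorem Ncount_mono (hN : ∀ B : ℝ, {x | H x ≤ B}.Finite) {V' V : Set (Pt F m)} (h : V' ⊆ V)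
    (B : ℝ) : Ncount H V' B ≤ Ncount H V B :=
  Set.ncard_le_ncard (fun _ hx => ⟨h hx.1, hx.2⟩) (finite_sep_height_le hN V B)

theorem tendsto_Ncount_atTop (hN : ∀ B : ℝ, {x | H x ≤ B}.Finite) {V : Set (Pt F m)}
    (hV : V.Infinite) : Tendsto (Ncount H V) atTop atTop := by
  refine tendsto_atTop_atTop_of_monotone (fun B₁ B₂ hB => Set.ncard_le_ncard
    (fun _ hx => ⟨hx.1, hx.2.trans hB⟩) (finite_sep_height_le hN V B₂)) fun n => ?_
  obtain ⟨t, htV, htfin, rfl⟩ := hV.exists_subset_ncard_eq n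
  obtain ⟨B, hB⟩ := (htfin.image H).bddAbove
  exact ⟨B, Set.ncard_le_ncard (fun x hx => ⟨htV hx, hB ⟨x, hx, rfl⟩⟩)
    (finite_sep_height_le hN V B)⟩

theorem ratio_le_one (hN : ∀ B : ℝ, {x | H x ≤ B}.Finite) {V' V : Set (Pt F m)} (h : V' ⊆ V)
    (B : ℝ) : ratio H V' V B ≤ 1 :=
  div_le_one_of_le₀ (Nat.cast_le.mpr (Ncount_mono hN h B)) (Nat.cast_nonneg _)

theorem ratio_union (hN : ∀ B : ℝ, {x | H x ≤ B}.Finite) {U₁ U₂ : Set (Pt F m)}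
    (hU : Disjoint U₁ U₂) (V : Set (Pt F m)) (B : ℝ) :
    ratio H (U₁ ∪ U₂) V B = ratio H U₁ V B + ratio H U₂ V B := by
  have hcount : Ncount H (U₁ ∪ U₂) B = Ncount H U₁ B + Ncount H U₂ B := by
    have hsep : {x ∈ U₁ ∪ U₂ | H x ≤ B} = {x ∈ U₁ | H x ≤ B} ∪ {x ∈ U₂ | H x ≤ B} :=
      Set.sep_union
    rw [Ncount, hsep]
    exact Set.ncard_union_eq (hU.mono (Set.sep_subset _ _) (Set.sep_subset _ _))
      (finite_sep_height_le hN U₁ B) (finite_sep_height_le hN U₂ B)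
  simp only [ratio, hcount, Nat.cast_add, add_div]

theorem ratio_mul_ratio (hN : ∀ B : ℝ, {x | H x ≤ B}.Finite) {W U : Set (Pt F m)} (h : W ⊆ U)
    (V : Set (Pt F m)) (B : ℝ) : ratio H W U B * ratio H U V B = ratio H W V B := by
  rcases (Ncount H U B).eq_zero_or_pos with hU | hU
  · have hW : Ncount H W B = 0 := Nat.le_zero.mp (hU ▸ Ncount_mono hN h B)
    simp [ratio, hU, hW]
  · exact div_mul_div_cancel₀ (Nat.cast_ne_zero.mpr hU.ne')

theorem tendsto_ratio_self (hN : ∀ B : ℝ, {x | H x ≤ B}.Finite) {V : Set (Pt F m)}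
    (hV : V.Infinite) : Tendsto (ratio H V V) atTop (𝓝 1) := by
  refine tendsto_const_nhds.congr' ?_
  filter_upwards [(tendsto_Ncount_atTop hN hV).eventually_ge_atTop 1] with B hB
  exact (div_self (Nat.cast_ne_zero.mpr (Nat.one_le_iff_ne_zero.mp hB))).symm

theorem tendsto_ratio_zero_of_finite (hN : ∀ B : ℝ, {x | H x ≤ B}.Finite)
    {W V : Set (Pt F m)} (hW : W.Finite) (hV : V.Infinite) :
    Tendsto (ratio H W V) atTop (𝓝 0) := by
  refine squeeze_zero (fun B => div_nonneg (Nat.cast_nonneg _) (Nat.cast_nonneg _))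
    (fun B => div_le_div_of_nonneg_right (Nat.cast_le.mpr
      (Set.ncard_le_ncard (Set.sep_subset W _) hW)) (Nat.cast_nonneg _))
    (tendsto_const_nhds.div_atTop (tendsto_natCast_atTop_atTop.comp (tendsto_Ncount_atTop hN hV)))

theorem tendsto_ratio_trans (hN : ∀ B : ℝ, {x | H x ≤ B}.Finite) {W U V : Set (Pt F m)}
    (h : W ⊆ U) {a b : ℝ} (hWU : Tendsto (ratio H W U) atTop (𝓝 a))
    (hUV : Tendsto (ratio H U V) atTop (𝓝 b)) : Tendsto (ratio H W V) atTop (𝓝 (a * b)) :=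
  (hWU.mul hUV).congr fun B => ratio_mul_ratio hN h V B

variable (H) in
def IsWeaklySaturatedFamily (V : Set (Pt F m)) (𝒲 : Set (Set (Pt F m))) : Prop :=
  𝒲.Finite ∧ ∀ W ∈ 𝒲, IsLocallyClosed W ∧ W ⊆ V ∧ WeaklySaturated H W

namespace IsWeaklySaturatedFamily

variable {V V' : Set (Pt F m)} {𝒲 𝒲' : Set (Set (Pt F m))}

theorem empty : IsWeaklySaturatedFamily H V ∅ :=
  ⟨Set.finite_empty, by simp⟩

theorem singleton (hV : IsLocallyClosed V) (hws : WeaklySaturated H V) :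
    IsWeaklySaturatedFamily H V {V} :=
  ⟨Set.finite_singleton V, by simpa using ⟨hV, hws⟩⟩

theorem sUnion_subset (h : IsWeaklySaturatedFamily H V 𝒲) : ⋃₀ 𝒲 ⊆ V :=
  Set.sUnion_subset fun W hW => (h.2 W hW).2.1

theorem mono (h : IsWeaklySaturatedFamily H V 𝒲) (hV : V ⊆ V') :
    IsWeaklySaturatedFamily H V' 𝒲 :=
  ⟨h.1, fun W hW => ⟨(h.2 W hW).1, (h.2 W hW).2.1.trans hV, (h.2 W hW).2.2⟩⟩

theorem union (h : IsWeaklySaturatedFamily H V 𝒲) (h' : IsWeaklySaturatedFamily H V 𝒲') :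
    IsWeaklySaturatedFamily H V (𝒲 ∪ 𝒲') :=
  ⟨h.1.union h'.1, fun W hW => hW.elim (h.2 W) (h'.2 W)⟩

end IsWeaklySaturatedFamily

theorem exists_dimv_lt_tendsto_ratio_one_of_not_weaklySaturated
    (hN : ∀ B : ℝ, {x | H x ≤ B}.Finite) (hdagger : Dagger H) {V : Set (Pt F m)}
    (hV : IsLocallyClosed V) (hirr : IsIrreducible V) (hVinf : V.Infinite)
    (hws : ¬ WeaklySaturated H V) :
    ∃ W, IsLocallyClosed W ∧ W ⊆ V ∧ dimv W < dimv V ∧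
      Tendsto (ratio H W V) atTop (𝓝 1) := by
  simp only [WeaklySaturated, hirr, hVinf, true_and, not_forall, not_exists, not_and,
    not_lt] at hws
  obtain ⟨W, hWlc, hWV, hdim, hL⟩ := hws
  obtain ⟨L, hWL⟩ := hdagger W V hWlc hV hWV hVinf
  have hL1 : L = 1 := le_antisymm
    (le_of_tendsto' hWL (ratio_le_one hN hWV)) (hL L hWL)
  exact ⟨W, hWlc, hWV, hdim, hL1 ▸ hWL⟩

theorem exists_weaklySaturatedFamily_tendsto_ratio_of_tendsto (hN : ∀ B : ℝ, {x | H x ≤ B}.Finite)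
    {V' V : Set (Pt F m)} (hVinf : V.Infinite) {δ : ℝ}
    (hδ : Tendsto (ratio H V' V) atTop (𝓝 δ))
    (hV' : V'.Infinite → ∃ 𝒲, IsWeaklySaturatedFamily H V' 𝒲 ∧
      Tendsto (ratio H (⋃₀ 𝒲) V') atTop (𝓝 1)) :
    ∃ 𝒲, IsWeaklySaturatedFamily H V' 𝒲 ∧ Tendsto (ratio H (⋃₀ 𝒲) V) atTop (𝓝 δ) := by
  rcases V'.finite_or_infinite with hfin | hinf
  · have hδ0 : δ = 0 := tendsto_nhds_unique hδ (tendsto_ratio_zero_of_finite hN hfin hVinf)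
    refine ⟨∅, .empty, ?_⟩
    simpa [hδ0] using tendsto_ratio_zero_of_finite hN Set.finite_empty hVinf
  · obtain ⟨𝒲, h𝒲, hlim⟩ := hV' hinf
    exact ⟨𝒲, h𝒲, by simpa using tendsto_ratio_trans hN h𝒲.sUnion_subset hlim hδ⟩

theorem exists_weaklySaturatedFamily_tendsto_ratio_one (hN : ∀ B : ℝ, {x | H x ≤ B}.Finite)
    (hdagger : Dagger H) {V : Set (Pt F m)} (hV : IsLocallyClosed V) (hVinf : V.Infinite) :
    ∃ 𝒲, IsWeaklySaturatedFamily H V 𝒲 ∧ Tendsto (ratio H (⋃₀ 𝒲) V) atTop (𝓝 1) := by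
  induction V using wellFounded_complexity.induction with | _ V ih => ?_
  have descend : ∀ V', IsLocallyClosed V' → complexity V' < complexity V → ∀ δ : ℝ,
      Tendsto (ratio H V' V) atTop (𝓝 δ) → ∃ 𝒲, IsWeaklySaturatedFamily H V' 𝒲 ∧
        Tendsto (ratio H (⋃₀ 𝒲) V) atTop (𝓝 δ) := fun V' hV' hlt δ hδ =>
    exists_weaklySaturatedFamily_tendsto_ratio_of_tendsto hN hVinf hδ (ih V' hlt hV')
  by_cases hirr : IsPreirreducible V
  · by_cases hws : WeaklySaturated H V
    · exact ⟨{V}, .singleton hV hws, by simpa using tendsto_ratio_self hN hVinf⟩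
    obtain ⟨W, hWlc, hWV, hdim, hW⟩ := exists_dimv_lt_tendsto_ratio_one_of_not_weaklySaturated
      hN hdagger hV ⟨hVinf.nonempty, hirr⟩ hVinf hws
    obtain ⟨𝒲, h𝒲, hlim⟩ := descend W hWlc (complexity_lt_of_dimv_lt hdim) 1 hW
    exact ⟨𝒲, h𝒲.mono hWV, hlim⟩
  obtain ⟨u, hu, hclos₁, hclos₂⟩ := exists_closure_ssubset_of_not_isPreirreducible hirr
  have hV₁ := hV.inter hu.isLocallyClosed
  have hV₂ := hV.inter hu.isClosed_compl.isLocallyClosed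
  obtain ⟨δ₁, hδ₁⟩ := hdagger _ V hV₁ hV Set.inter_subset_left hVinf
  obtain ⟨δ₂, hδ₂⟩ := hdagger _ V hV₂ hV Set.inter_subset_left hVinf
  obtain ⟨𝒲₁, h𝒲₁, hlim₁⟩ := descend _ hV₁
    (complexity_lt_of_closure_ssubset Set.inter_subset_left hclos₁) δ₁ hδ₁
  obtain ⟨𝒲₂, h𝒲₂, hlim₂⟩ := descend _ hV₂
    (complexity_lt_of_closure_ssubset Set.inter_subset_left hclos₂) δ₂ hδ₂
  have hdisj : Disjoint (V ∩ u) (V ∩ uᶜ) :=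
    disjoint_compl_right.mono Set.inter_subset_right Set.inter_subset_right
  have hsum : δ₁ + δ₂ = 1 := by
    refine tendsto_nhds_unique ((hδ₁.add hδ₂).congr fun B => ?_) (tendsto_ratio_self hN hVinf)
    rw [← ratio_union hN hdisj, Set.inter_union_compl]
  refine ⟨𝒲₁ ∪ 𝒲₂, (h𝒲₁.mono Set.inter_subset_left).union (h𝒲₂.mono Set.inter_subset_left), ?_⟩
  rw [← hsum, Set.sUnion_union]
  exact (hlim₁.add hlim₂).congr fun B => (ratio_union hN
    (hdisj.mono h𝒲₁.sUnion_subset h𝒲₂.sUnion_subset) V B).symm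

end ProjSat

open ProjSat Filter Topology

theorem exists_finitely_many_weakly_saturated_general
    (F : Type) [Field F] (m : ℕ)
    (H : Pt F m → ℝ)
    (hNorthcott : ∀ B : ℝ, {x : Pt F m | H x ≤ B}.Finite)
    (hdagger : Dagger H)
    (V : Set (Pt F m)) (hV : IsLocallyClosed V) (hVinf : V.Infinite) :
    ∃ (k : ℕ) (W : Fin k → Set (Pt F m)),
      (∀ i, IsLocallyClosed (W i) ∧ W i ⊆ V ∧ WeaklySaturated H (W i)) ∧
      Tendsto (ratio H (⋃ i, W i) V) atTop (𝓝 1) := by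
  obtain ⟨𝒲, ⟨h𝒲fin, h𝒲⟩, hlim⟩ :=
    exists_weaklySaturatedFamily_tendsto_ratio_one hNorthcott hdagger hV hVinf
  obtain ⟨k, W, hW⟩ := h𝒲fin.fin_embedding
  refine ⟨k, fun i => W i, fun i => h𝒲 (W i) (hW ▸ Set.mem_range_self i), ?_⟩
  rwa [← Set.sUnion_range, hW]

/-- **Decomposition into weakly saturated subvarieties.**
Assume Assumption (†).  Let `V` be a subvariety of `ℙ^m` over a number field `F` with
`V(F)` infinite.  Then there exist finitely many weakly saturated locally closed
subvarieties `W₁, …, W_k ⊆ V` with `lim_{B→∞} N(W₁ ∪ ⋯ ∪ W_k, B)/N(V,B) = 1`. -/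
theorem exists_finitely_many_weakly_saturated
    (F : Type) [Field F] [NumberField F] (m : ℕ)
    (H : Pt F m → ℝ) (hHpos : ∀ x, 0 < H x)
    (hNorthcott : ∀ B : ℝ, {x : Pt F m | H x ≤ B}.Finite)
    (hdagger : Dagger H)
    (V : Set (Pt F m)) (hV : IsLocallyClosed V) (hVinf : V.Infinite) :
    ∃ (k : ℕ) (W : Fin k → Set (Pt F m)),
      (∀ i, IsLocallyClosed (W i) ∧ W i ⊆ V ∧ WeaklySaturated H (W i)) ∧
      Tendsto (ratio H (⋃ i, W i) V) atTop (𝓝 1) :=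
  exists_finitely_many_weakly_saturated_general F m H hNorthcott hdagger V hV hVinf
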